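/- arXiv:1909.11815 — 5 statements merged into one kernel-verified Lean document; each statement's English description precedes it below -/
import Mathlib

section
/- Let κ : X × X → ℂ be a bounded Borel kernel that is G-equivariant, i.e. κ(g·x, g·x') = κ(x,x') for all g ∈ G and x,x' ∈ X, and has propagation at most r, i.e. κ(x,x') = 0 whenever d(x,x') > r. Then for all x, x' ∈ X the function g ↦ κ(g⁻¹·x, x') is Borel, bounded, and supported in a compact subset of G, so that Av(κ)(x,x') := ∫_G κ(g⁻¹·x, x') dg is a well-defined (convergent) integral; moreover (i) Av(κ)(g·x, g'·x') = Av(κ)(x,x') for all g, g' ∈ G and all x, x' ∈ X, and (ii) Av(κ)(x,x') = 0 whenever inf_{g ∈ G} d(g·x, x') > r. -/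
open MeasureTheory

/-! The integrand `g ↦ κ(g⁻¹ • x, x')` vanishes unless `g⁻¹ • x` lies in the closed ball of
radius `r` about `x'`, and properness of the action makes the set of such `g` compact; a bounded
measurable function supported in a compact set is Haar integrable. Equivariance of `κ` turns the
integrand at `(g • x, g' • x')` into the integrand at `(x, x')` translated on the left by `g⁻¹`
and on the right by `g'`, and the Haar measure of a unimodular group is invariant under both. -/

section ProperAction

variable {G X : Type*} [Group G] [TopologicalSpace G] [TopologicalSpace X] [MulAction G X]

lemma ProperSMul.isCompact_setOf_smul_mem [ProperSMul G X] (x : X) {V : Set X}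
    (hV : IsCompact V) : IsCompact {g : G | g • x ∈ V} := by
  convert ProperSMul.isCompact_setOfPred_inter_nonempty (G := G) (isCompact_singleton (x := x)) hV
    using 1
  ext g
  simp

lemma ProperSMul.isCompact_setOf_inv_smul_mem [IsTopologicalGroup G] [ProperSMul G X] (x : X)
    {V : Set X} (hV : IsCompact V) : IsCompact {g : G | g⁻¹ • x ∈ V} :=
  (ProperSMul.isCompact_setOf_smul_mem x hV).inv

end ProperAction

lemma integrable_of_bounded_of_support_subset {α E : Type*} [MeasurableSpace α]
    [NormedAddCommGroup E] {μ : Measure α} {f : α → E} {K : Set α} {C : ℝ}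
    (hf : AEStronglyMeasurable f μ) (hK : μ K ≠ ⊤) (hfK : Function.support f ⊆ K)
    (hC : ∀ a, ‖f a‖ ≤ C) : Integrable f μ :=
  (integrableOn_iff_integrable_of_support_subset hfK).mp
    (Measure.integrableOn_of_bounded hK hf (ae_of_all _ hC))

lemma integral_mul_mul_eq_self {G E : Type*} [Group G] [MeasurableSpace G] [MeasurableMul G]
    [NormedAddCommGroup E] [NormedSpace ℝ E] (μ : Measure G) [μ.IsMulLeftInvariant]
    [μ.IsMulRightInvariant] (f : G → E) (g g' : G) :
    ∫ h, f (g * h * g') ∂μ = ∫ h, f h ∂μ := by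
  simp_rw [mul_assoc]
  exact (integral_mul_right_eq_self (fun h => f (g * h)) g').trans (integral_mul_left_eq_self f g)

section Kernel

variable {G X E : Type*} [Group G] [MulAction G X]

lemma measurable_kernel_inv_smul [TopologicalSpace G] [ContinuousInv G] [MeasurableSpace G]
    [OpensMeasurableSpace G] [TopologicalSpace X] [MeasurableSpace X] [BorelSpace X]
    [ContinuousSMul G X] [MeasurableSpace E] {κ : X × X → E} (hκ : Measurable κ) (x x' : X) :
    Measurable fun g : G => κ (g⁻¹ • x, x') :=
  hκ.comp (((continuous_inv.smul continuous_const).measurable).prodMk measurable_const)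

lemma kernel_inv_smul_smul {κ : X × X → E}
    (hκ : ∀ (g : G) (x x' : X), κ (g • x, g • x') = κ (x, x')) (g g' h : G) (x x' : X) :
    κ (h⁻¹ • g • x, g' • x') = κ ((g⁻¹ * h * g')⁻¹ • x, x') := by
  rw [← hκ g'⁻¹, inv_smul_smul, smul_smul, smul_smul]
  congr 2
  group

variable [MetricSpace X] [Zero E] {κ : X × X → E} {r : ℝ}

lemma support_kernel_inv_smul_subset (hκ : ∀ x x' : X, r < dist x x' → κ (x, x') = 0)
    (x x' : X) :
    Function.support (fun g : G => κ (g⁻¹ • x, x')) ⊆ {g | g⁻¹ • x ∈ Metric.closedBall x' r} :=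
  fun _ hg => Metric.mem_closedBall.mpr (not_lt.mp (mt (hκ _ _) hg))

lemma kernel_inv_smul_eq_zero_of_lt_iInf_dist
    (hκ : ∀ x x' : X, r < dist x x' → κ (x, x') = 0) {x x' : X}
    (hr : r < ⨅ g : G, dist (g • x) x') (h : G) : κ (h⁻¹ • x, x') = 0 :=
  hκ _ _ (hr.trans_le (ciInf_le ⟨0, by rintro _ ⟨g, rfl⟩; exact dist_nonneg⟩ h⁻¹))

end Kernel

section Average

variable {G X E : Type*} [Group G] [MulAction G X] [MeasurableSpace G]
  [NormedAddCommGroup E] [NormedSpace ℝ E] (μ : Measure G) {κ : X × X → E}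

/-- The paper's `Av(κ)`. -/
noncomputable def averagedKernel (κ : X × X → E) (x x' : X) : E :=
  ∫ g, κ (g⁻¹ • x, x') ∂μ

lemma averagedKernel_smul_smul [MeasurableMul G] [μ.IsMulLeftInvariant] [μ.IsMulRightInvariant]
    (hκ : ∀ (g : G) (x x' : X), κ (g • x, g • x') = κ (x, x')) (g g' : G) (x x' : X) :
    averagedKernel μ κ (g • x) (g' • x') = averagedKernel μ κ x x' := by
  simp only [averagedKernel, kernel_inv_smul_smul hκ]
  exact integral_mul_mul_eq_self μ (fun k => κ (k⁻¹ • x, x')) g⁻¹ g'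

lemma averagedKernel_eq_zero_of_lt_iInf_dist [MetricSpace X] {r : ℝ}
    (hκ : ∀ x x' : X, r < dist x x' → κ (x, x') = 0) {x x' : X}
    (hr : r < ⨅ g : G, dist (g • x) x') : averagedKernel μ κ x x' = 0 := by
  simp only [averagedKernel, kernel_inv_smul_eq_zero_of_lt_iInf_dist hκ hr, integral_zero]

end Average

theorem averaged_kernel_wellDefined_general
    {G X : Type*}
    [Group G] [TopologicalSpace G] [IsTopologicalGroup G]
    [MeasurableSpace G] [BorelSpace G]
    (μG : Measure G) [μG.IsHaarMeasure] [μG.IsMulRightInvariant]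
    [MetricSpace X] [ProperSpace X] [MeasurableSpace X] [BorelSpace X]
    [MulAction G X] [ContinuousSMul G X]
    (hproper : IsProperMap fun p : G × X => (p.1 • p.2, p.2))
    (κ : X × X → ℂ) (r : ℝ)
    (hκ_meas : Measurable κ)
    (hκ_bdd : ∃ C, ∀ p, ‖κ p‖ ≤ C)
    (hκ_equiv : ∀ (g : G) (x x' : X), κ (g • x, g • x') = κ (x, x'))
    (hκ_prop : ∀ x x' : X, r < dist x x' → κ (x, x') = 0) :
    (∀ x x' : X, Measurable fun g : G => κ (g⁻¹ • x, x')) ∧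
    (∀ x x' : X, ∃ C, ∀ g : G, ‖κ (g⁻¹ • x, x')‖ ≤ C) ∧
    (∀ x x' : X, ∃ K : Set G, IsCompact K ∧ ∀ g ∉ K, κ (g⁻¹ • x, x') = 0) ∧
    (∀ x x' : X, Integrable (fun g : G => κ (g⁻¹ • x, x')) μG) ∧
    (∀ (g g' : G) (x x' : X),
      ∫ h : G, κ (h⁻¹ • (g • x), g' • x') ∂μG = ∫ h : G, κ (h⁻¹ • x, x') ∂μG) ∧
    (∀ x x' : X, (r < ⨅ g : G, dist (g • x) x') →
      ∫ h : G, κ (h⁻¹ • x, x') ∂μG = 0) := by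
  have : ProperSMul G X := ⟨hproper⟩
  obtain ⟨C, hC⟩ := hκ_bdd
  have hK : ∀ x x' : X, IsCompact {g : G | g⁻¹ • x ∈ Metric.closedBall x' r} := fun x x' =>
    ProperSMul.isCompact_setOf_inv_smul_mem x (isCompact_closedBall x' r)
  have hsupp := support_kernel_inv_smul_subset (G := G) hκ_prop
  refine ⟨measurable_kernel_inv_smul hκ_meas, fun _ _ => ⟨C, fun _ => hC _⟩,
    fun x x' => ⟨_, hK x x', fun g hg => Function.notMem_support.mp fun h => hg (hsupp x x' h)⟩,
    fun x x' => ?_, averagedKernel_smul_smul μG hκ_equiv,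
    fun _ _ => averagedKernel_eq_zero_of_lt_iInf_dist μG hκ_prop⟩
  exact integrable_of_bounded_of_support_subset
    (measurable_kernel_inv_smul hκ_meas x x').aestronglyMeasurable
    (hK x x').measure_lt_top.ne (hsupp x x') (fun _ => hC _)

/-- For a bounded Borel `G`-equivariant kernel `κ` of propagation at most
`r`, the function `g ↦ κ(g⁻¹ • x, x')` is Borel, bounded and compactly supported (hence
integrable), so the averaged kernel `Av(κ)(x,x') = ∫_G κ(g⁻¹ • x, x') dg` is well defined;
moreover `Av(κ)` is `G × G`-invariant and vanishes when the distance between the orbits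
`G·x` and `G·x'` exceeds `r`. -/
theorem averaged_kernel_wellDefined
    {G X : Type*}
    [Group G] [TopologicalSpace G] [IsTopologicalGroup G] [LocallyCompactSpace G] [T2Space G]
    [MeasurableSpace G] [BorelSpace G]
    (μG : Measure G) [μG.IsHaarMeasure] [μG.IsMulRightInvariant] [μG.IsInvInvariant]
    [MetricSpace X] [ProperSpace X] [MeasurableSpace X] [BorelSpace X]
    [MulAction G X] [ContinuousSMul G X]
    (hiso : ∀ (g : G) (x y : X), dist (g • x) (g • y) = dist x y)
    (hproper : IsProperMap fun p : G × X => (p.1 • p.2, p.2))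
    (κ : X × X → ℂ) (r : ℝ)
    (hκ_meas : Measurable κ)
    (hκ_bdd : ∃ C, ∀ p, ‖κ p‖ ≤ C)
    (hκ_equiv : ∀ (g : G) (x x' : X), κ (g • x, g • x') = κ (x, x'))
    (hκ_prop : ∀ x x' : X, r < dist x x' → κ (x, x') = 0) :
    (∀ x x' : X, Measurable fun g : G => κ (g⁻¹ • x, x')) ∧
    (∀ x x' : X, ∃ C, ∀ g : G, ‖κ (g⁻¹ • x, x')‖ ≤ C) ∧
    (∀ x x' : X, ∃ K : Set G, IsCompact K ∧ ∀ g ∉ K, κ (g⁻¹ • x, x') = 0) ∧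
    (∀ x x' : X, Integrable (fun g : G => κ (g⁻¹ • x, x')) μG) ∧
    (∀ (g g' : G) (x x' : X),
      ∫ h : G, κ (h⁻¹ • (g • x), g' • x') ∂μG = ∫ h : G, κ (h⁻¹ • x, x') ∂μG) ∧
    (∀ x x' : X, (r < ⨅ g : G, dist (g • x) x') →
      ∫ h : G, κ (h⁻¹ • x, x') ∂μG = 0) :=
  averaged_kernel_wellDefined_general μG hproper κ r hκ_meas hκ_bdd hκ_equiv hκ_prop
end

section
/- Let χ : X → [0,∞) be a bounded continuous function such that (a) for every x ∈ X the set {g ∈ G : χ(g·x) ≠ 0} is relatively compact in G, (b) ∫_G χ(g·x)² dg = 1 for every x ∈ X, and (c) d(x,x') ≤ d_G(x,x') + 1 for all x, x' in the support of χ. Let κ_G : X × X → ℂ be a bounded Borel function invariant under G × G, i.e. κ_G(g·x, g'·x') = κ_G(x,x') for all g, g' ∈ G, and satisfying κ_G(x,x') = 0 whenever d_G(x,x') > r. Define κ(x,x') := (∫_G χ(g·x)² χ(g·x')² dg) · κ_G(x,x'). Then κ is a bounded Borel kernel with: (i) κ(g·x, g·x') = κ(x,x') for all g ∈ G and x,x'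 ∈ X; (ii) κ(x,x') = 0 whenever d(x,x') > r + 1; (iii) ∫_G κ(g⁻¹·x, x') dg = κ_G(x,x') for all x, x' ∈ X, i.e. Av(κ) = κ_G. -/
/-!
The overlap `I(x, x') = ∫ χ(g•x)² χ(g•x')² dg` is invariant under the diagonal action by right
invariance of the Haar measure, and it vanishes unless some `g` moves both `x` and `x'` into the
support of `χ`, where transversality gives `d(x, x') ≤ d_G(x, x') + 1`. Averaging `I(g⁻¹•x, x')`
over `g` and swapping the integrals (Fubini for compactly supported continuous functions, which
needs no σ-finiteness) gives `∫ χ(g•x)² dg · ∫ χ(g•x')² dg = 1` by left and inversion invariance.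
`I` is continuous, so `κ` is measurable: by properness of the action, for `y` near `x₀` the
integrand is supported in one compact subset of `G`.
-/

open MeasureTheory Pointwise Metric

section OrbitDist

variable (G : Type*) {X : Type*} [Group G] [PseudoMetricSpace X] [MulAction G X]

noncomputable def orbitDist (x x' : X) : ℝ := ⨅ g : G, dist (g • x) x'

variable {G}

theorem orbitDist_le_dist (x x' : X) : orbitDist G x x' ≤ dist x x' := by
  simpa [orbitDist] using ciInf_le (f := fun g : G => dist (g • x) x')
    ⟨0, by rintro _ ⟨g, rfl⟩; exact dist_nonneg⟩ 1

theorem orbitDist_smul_smul [IsIsometricSMul G X] (g g' : G) (x x' : X) :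
    orbitDist G (g • x) (g' • x') = orbitDist G x x' := by
  refine ((Equiv.mulLeft g'⁻¹).trans (Equiv.mulRight g)).iInf_congr fun k => ?_
  rw [← dist_smul g']
  simp [smul_smul, mul_assoc]

theorem dist_smul_smul_le_orbitDist_add_one [IsIsometricSMul G X] {χ : X → ℝ}
    (htr : ∀ x x', χ x ≠ 0 → χ x' ≠ 0 → dist x x' ≤ orbitDist G x x' + 1)
    {g g' : G} {x x' : X} (hx : χ (g • x) ≠ 0) (hx' : χ (g' • x') ≠ 0) :
    dist (g • x) (g' • x') ≤ orbitDist G x x' + 1 := by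
  simpa only [orbitDist_smul_smul] using htr _ _ hx hx'

end OrbitDist

theorem integral_integral_mul_inv_mul_eq_mul {G : Type*} [Group G] [TopologicalSpace G]
    [IsTopologicalGroup G] [T2Space G] [MeasurableSpace G] [BorelSpace G] (μ : Measure G)
    [μ.IsMulLeftInvariant] [μ.IsInvInvariant] [IsFiniteMeasureOnCompacts μ] {a b : G → ℝ}
    (ha : Continuous a) (ha' : HasCompactSupport a) (hb : Continuous b)
    (hb' : HasCompactSupport b) :
    ∫ g, ∫ h, a (h * g⁻¹) * b h ∂μ ∂μ = (∫ g, a g ∂μ) * ∫ h, b h ∂μ := by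
  have hsupp : HasCompactSupport fun p : G × G => a (p.2 * p.1⁻¹) * b p.2 := by
    refine HasCompactSupport.intro ((ha'.isCompact.inv.mul hb'.isCompact).prod hb'.isCompact)
      fun p hp => ?_
    by_contra hne
    have hb₀ := subset_tsupport _ (right_ne_zero_of_mul hne)
    refine hp ⟨?_, hb₀⟩
    have ha₀ := subset_tsupport _ (left_ne_zero_of_mul hne)
    simpa using Set.mul_mem_mul (Set.inv_mem_inv.2 ha₀) hb₀
  rw [integral_integral_swap_of_hasCompactSupport (f := fun g h => a (h * g⁻¹) * b h)
    (by fun_prop) hsupp, ← integral_const_mul]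
  congr 1 with h
  rw [integral_mul_const, integral_inv_eq_self (fun g => a (h * g)) μ, integral_mul_left_eq_self]

section CutoffOverlap

variable {G X : Type*} [Group G] [MeasurableSpace G] [MulAction G X] (μ : Measure G)
  {χ : X → ℝ}

noncomputable def cutoffOverlap (χ : X → ℝ) (x x' : X) : ℝ := ∫ g, χ (g • x) ^ 2 * χ (g • x') ^ 2 ∂μ

theorem cutoffOverlap_nonneg (x x' : X) : 0 ≤ cutoffOverlap μ χ x x' :=
  integral_nonneg fun _ => by positivity

theorem cutoffOverlap_le {C : ℝ} (hχ₀ : ∀ x, 0 ≤ χ x) (hC : ∀ x, χ x ≤ C) {x : X}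
    (hint : Integrable (fun g : G => χ (g • x) ^ 2) μ) (x' : X) :
    cutoffOverlap μ χ x x' ≤ C ^ 2 * ∫ g, χ (g • x) ^ 2 ∂μ := by
  rw [← integral_const_mul]
  refine integral_mono_of_nonneg (.of_forall fun _ => by positivity) (hint.const_mul _)
    (.of_forall fun g => ?_)
  exact (mul_le_mul_of_nonneg_left (pow_le_pow_left₀ (hχ₀ _) (hC _) 2) (sq_nonneg _)).trans_eq
    (mul_comm _ _)

theorem cutoffOverlap_smul [MeasurableMul G] [μ.IsMulRightInvariant] (g : G) (x x' : X) :
    cutoffOverlap μ χ (g • x) (g • x') = cutoffOverlap μ χ x x' := by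
  simp only [cutoffOverlap, smul_smul]
  exact integral_mul_right_eq_self (fun h => χ (h • x) ^ 2 * χ (h • x') ^ 2) g

theorem dist_le_orbitDist_add_one_of_cutoffOverlap_ne_zero [PseudoMetricSpace X]
    [IsIsometricSMul G X] (htr : ∀ x x', χ x ≠ 0 → χ x' ≠ 0 → dist x x' ≤ orbitDist G x x' + 1)
    {x x' : X} (h : cutoffOverlap μ χ x x' ≠ 0) : dist x x' ≤ orbitDist G x x' + 1 := by
  obtain ⟨g, hg⟩ : ∃ g : G, χ (g • x) ^ 2 * χ (g • x') ^ 2 ≠ 0 := by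
    by_contra! h₀
    exact h (by simp [cutoffOverlap, h₀])
  simp only [ne_eq, mul_eq_zero, pow_eq_zero_iff two_ne_zero, not_or] at hg
  rw [← dist_smul g]
  exact dist_smul_smul_le_orbitDist_add_one htr hg.1 hg.2

theorem continuous_cutoffOverlap [TopologicalSpace G] [OpensMeasurableSpace G]
    [IsLocallyFiniteMeasure μ] [PseudoMetricSpace X] [ProperSpace X] [IsIsometricSMul G X]
    [ProperSMul G X] (hχ : Continuous χ)
    (htr : ∀ x x', χ x ≠ 0 → χ x' ≠ 0 → dist x x' ≤ orbitDist G x x' + 1)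
    (hex : ∀ x, ∃ g : G, χ (g • x) ≠ 0) :
    Continuous fun p : X × X => cutoffOverlap μ χ p.1 p.2 := by
  refine continuous_iff_continuousAt.2 fun p₀ => ?_
  obtain ⟨g₀, hg₀⟩ := hex p₀.1
  set T := {g : G | (g • closedBall p₀.1 1 ∩ closedBall (g₀ • p₀.1) 2).Nonempty}
  have hT : IsCompact T := ProperSMul.isCompact_setOfPred_inter_nonempty
    (isCompact_closedBall _ _) (isCompact_closedBall _ _)
  have hzero : ∀ y ∈ closedBall p₀.1 1, ∀ g ∉ T, χ (g • y) = 0 := by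
    intro y hy g hg
    by_contra hgy
    -- transversality pins `g • y` within distance `d(y, x₀) + 1 ≤ 2` of `g₀ • x₀`
    refine hg ⟨g • y, Set.smul_mem_smul_set hy, ?_⟩
    have := dist_smul_smul_le_orbitDist_add_one htr hgy hg₀
    rw [mem_closedBall] at hy ⊢
    linarith [orbitDist_le_dist (G := G) y p₀.1]
  have hF : Continuous (Function.uncurry fun (p : X × X) (g : G) =>
      χ (g • p.1) ^ 2 * χ (g • p.2) ^ 2) := by
    fun_prop
  refine (continuous_parametric_integral_of_continuous (μ := μ) hF hT).continuousAt.congr ?_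
  filter_upwards [continuous_fst.continuousAt (closedBall_mem_nhds p₀.1 one_pos)] with p hp
  exact setIntegral_eq_integral_of_forall_compl_eq_zero fun g hg => by simp [hzero p.1 hp g hg]

theorem integral_cutoffOverlap_inv_smul [TopologicalSpace G] [IsTopologicalGroup G] [T2Space G]
    [BorelSpace G] [μ.IsMulLeftInvariant] [μ.IsInvInvariant] [IsFiniteMeasureOnCompacts μ]
    [TopologicalSpace X] [ContinuousSMul G X]
    (hχ : Continuous χ) {x x' : X} (hx : HasCompactSupport fun g : G => χ (g • x))
    (hx' : HasCompactSupport fun g : G => χ (g • x')) :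
    ∫ g, cutoffOverlap μ χ (g⁻¹ • x) x' ∂μ =
      (∫ g, χ (g • x) ^ 2 ∂μ) * ∫ g, χ (g • x') ^ 2 ∂μ := by
  simp only [cutoffOverlap, smul_smul]
  exact integral_integral_mul_inv_mul_eq_mul μ (a := fun g => χ (g • x) ^ 2) (by fun_prop)
    (hx.comp_left (zero_pow two_ne_zero)) (by fun_prop) (hx'.comp_left (zero_pow two_ne_zero))

end CutoffOverlap

theorem averaging_surjective_kernel_general
    {G X : Type*}
    [Group G] [TopologicalSpace G] [IsTopologicalGroup G] [LocallyCompactSpace G] [T2Space G]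
    [MeasurableSpace G] [BorelSpace G]
    (μG : Measure G) [μG.IsHaarMeasure] [μG.IsMulRightInvariant] [μG.IsInvInvariant]
    [MetricSpace X] [ProperSpace X] [MeasurableSpace X] [BorelSpace X]
    [MulAction G X]
    (hiso : ∀ (g : G) (x y : X), dist (g • x) (g • y) = dist x y)
    (hproper : IsProperMap fun p : G × X => (p.1 • p.2, p.2))
    (χ : X → ℝ) (hχ_cont : Continuous χ) (hχ_nonneg : ∀ x, 0 ≤ χ x)
    (hχ_bdd : ∃ C, ∀ x, χ x ≤ C)
    (hχ_cpt : ∀ x : X, IsCompact (closure {g : G | χ (g • x) ≠ 0}))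
    (hχ_int : ∀ x : X, ∫ g, (χ (g • x)) ^ 2 ∂μG = 1)
    (hχ_transv : ∀ x x' : X, χ x ≠ 0 → χ x' ≠ 0 →
      dist x x' ≤ (⨅ g : G, dist (g • x) x') + 1)
    (κG : X × X → ℂ) (r : ℝ)
    (hκG_meas : Measurable κG)
    (hκG_bdd : ∃ C, ∀ p, ‖κG p‖ ≤ C)
    (hκG_inv : ∀ (g g' : G) (x x' : X), κG (g • x, g' • x') = κG (x, x'))
    (hκG_prop : ∀ x x' : X, r < ⨅ g : G, dist (g • x) x' → κG (x, x') = 0)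
    (κ : X × X → ℂ)
    (hκ_def : ∀ x x' : X,
      κ (x, x') = ((∫ g, (χ (g • x)) ^ 2 * (χ (g • x')) ^ 2 ∂μG : ℝ) : ℂ) * κG (x, x')) :
    Measurable κ ∧ (∃ C, ∀ p, ‖κ p‖ ≤ C) ∧
    (∀ (g : G) (x x' : X), κ (g • x, g • x') = κ (x, x')) ∧
    (∀ x x' : X, r + 1 < dist x x' → κ (x, x') = 0) ∧
    (∀ x x' : X, ∫ g : G, κ (g⁻¹ • x, x') ∂μG = κG (x, x')) := by
  have : IsIsometricSMul G X := ⟨fun g => Isometry.of_dist_eq (hiso g)⟩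
  have : ProperSMul G X := ⟨hproper⟩
  obtain ⟨C, hC⟩ := hχ_bdd
  obtain ⟨Cκ, hCκ⟩ := hκG_bdd
  have hsupp : ∀ x, HasCompactSupport fun g : G => χ (g • x) := hχ_cpt
  have hex : ∀ x, ∃ g : G, χ (g • x) ≠ 0 := fun x => by
    by_contra! h
    simpa [h] using hχ_int x
  obtain rfl : κ = fun p => (cutoffOverlap μG χ p.1 p.2 : ℂ) * κG p :=
    funext fun p => hκ_def p.1 p.2
  refine ⟨?_, ⟨C ^ 2 * Cκ, fun p => ?_⟩, fun g x x' => ?_, fun x x' hd => ?_,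
    fun x x' => ?_⟩
  · exact (Complex.measurable_ofReal.comp
      (continuous_cutoffOverlap μG hχ_cont hχ_transv hex).measurable).mul hκG_meas
  · have hI := cutoffOverlap_le μG hχ_nonneg hC
      ((by fun_prop : Continuous fun g : G => χ (g • p.1) ^ 2).integrable_of_hasCompactSupport
        ((hsupp p.1).comp_left (zero_pow two_ne_zero))) p.2
    rw [hχ_int, mul_one] at hI
    rw [norm_mul, Complex.norm_real, Real.norm_of_nonneg (cutoffOverlap_nonneg μG _ _)]
    exact mul_le_mul hI (hCκ p) (norm_nonneg _) (sq_nonneg C)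
  · simp only [cutoffOverlap_smul, hκG_inv]
  · dsimp only
    rcases eq_or_ne (cutoffOverlap μG χ x x') 0 with h₀ | h₀
    · simp [h₀]
    · have := dist_le_orbitDist_add_one_of_cutoffOverlap_ne_zero μG hχ_transv h₀
      rw [hκG_prop x x' (show r < orbitDist G x x' by linarith), mul_zero]
  · have hinv : ∀ g : G, κG (g⁻¹ • x, x') = κG (x, x') := fun g => by
      simpa using hκG_inv g⁻¹ 1 x x'
    simp only [hinv, integral_mul_const]
    rw [integral_complex_ofReal, integral_cutoffOverlap_inv_smul μG hχ_cont (hsupp x) (hsupp x'),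
      hχ_int, hχ_int, mul_one, Complex.ofReal_one, one_mul]

/-- Given a cutoff function `χ` whose support extends mainly
transversally to the orbits, and a `G × G`-invariant bounded Borel kernel `κ_G` on the
orbit space of propagation at most `r`, the kernel
`κ(x,x') = (∫_G χ(g•x)² χ(g•x')² dg) · κ_G(x,x')` is a bounded Borel kernel which is
invariant under the diagonal `G`-action, has propagation at most `r + 1`, and satisfies
`Av(κ) = κ_G`.  (This is the surjectivity part of Lemma 4.1 of the paper.) -/
theorem averaging_surjective_kernel
    {G X : Type*}
    [Group G] [TopologicalSpace G] [IsTopologicalGroup G] [LocallyCompactSpace G] [T2Space G]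
    [MeasurableSpace G] [BorelSpace G]
    (μG : Measure G) [μG.IsHaarMeasure] [μG.IsMulRightInvariant] [μG.IsInvInvariant]
    [MetricSpace X] [ProperSpace X] [MeasurableSpace X] [BorelSpace X]
    [MulAction G X] [ContinuousSMul G X]
    (hiso : ∀ (g : G) (x y : X), dist (g • x) (g • y) = dist x y)
    (hproper : IsProperMap fun p : G × X => (p.1 • p.2, p.2))
    (χ : X → ℝ) (hχ_cont : Continuous χ) (hχ_nonneg : ∀ x, 0 ≤ χ x)
    (hχ_bdd : ∃ C, ∀ x, χ x ≤ C)
    (hχ_cpt : ∀ x : X, IsCompact (closure {g : G | χ (g • x) ≠ 0}))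
    (hχ_int : ∀ x : X, ∫ g, (χ (g • x)) ^ 2 ∂μG = 1)
    (hχ_transv : ∀ x x' : X, χ x ≠ 0 → χ x' ≠ 0 →
      dist x x' ≤ (⨅ g : G, dist (g • x) x') + 1)
    (κG : X × X → ℂ) (r : ℝ)
    (hκG_meas : Measurable κG)
    (hκG_bdd : ∃ C, ∀ p, ‖κG p‖ ≤ C)
    (hκG_inv : ∀ (g g' : G) (x x' : X), κG (g • x, g' • x') = κG (x, x'))
    (hκG_prop : ∀ x x' : X, r < ⨅ g : G, dist (g • x) x' → κG (x, x') = 0)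
    (κ : X × X → ℂ)
    (hκ_def : ∀ x x' : X,
      κ (x, x') = ((∫ g, (χ (g • x)) ^ 2 * (χ (g • x')) ^ 2 ∂μG : ℝ) : ℂ) * κG (x, x')) :
    Measurable κ ∧ (∃ C, ∀ p, ‖κ p‖ ≤ C) ∧
    (∀ (g : G) (x x' : X), κ (g • x, g • x') = κ (x, x')) ∧
    (∀ x x' : X, r + 1 < dist x x' → κ (x, x') = 0) ∧
    (∀ x x' : X, ∫ g : G, κ (g⁻¹ • x, x') ∂μG = κG (x, x')) :=
  averaging_surjective_kernel_general μG hiso hproper χ hχ_cont hχ_nonneg hχ_bdd hχ_cpt hχ_int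
    hχ_transv κG r hκG_meas hκG_bdd hκG_inv hκG_prop κ hκ_def
end

section
/- Let (X,d) be a metric space with a Borel measure μ, and let T be a bounded operator on L²(X,μ) of propagation at most r. Let {ψ_j}_{j∈ℕ} and {ψ'_k}_{k∈ℕ} be two families of continuous functions X → [0,1], each summing pointwise to 1 on X, and such that in each family, for every index j and every ρ > 0, the set of indices k in that family with d(supp ψ_j, supp ψ_k) ≤ ρ is finite. Let s : X → ℂ be Borel with ψ_j·s ∈ L²(X,μ) and ψ'_k·s ∈ L²(X,μ) for all j, k. Then for every bounded Borel function f : X → ℂ with bounded nonempty support: (i) f·T(ψ_j·s) = 0 in L²(X,μ) for all but finitely many j; and (ii) Σ_j f·T(ψ_j·s) = Σ_k f·T(ψ'_k·s) in L²(X,μ), both sums having only finitely many nonzero terms. In particular, the averaged operator applied to s, localised by any f, is independent of the choice of such a partition of unity. -/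
/-!
Only finitely many `ψ k` come within distance `r + 1` of the bounded set `supp f`, since all of
them then come within a bounded distance of one `ψ j₀` whose support meets `supp f`; call this
finite set `G`, and `G'` the analogous set for `ψ'`. For `u ∈ L²` the remainder
`u - ∑ k ∈ G, ψ k · u` lives on the supports of the other `ψ k`, which are more than `r` away from
`supp f`, so the propagation bound makes `M f ∘ T` kill it. Hence
`M f (T (ψ j · s)) = ∑ k ∈ G', M f (T (ψ' k · ψ j · s))` for every `j`, and symmetrically;
exchanging the two finite sums gives the result.
-/

open MeasureTheory Function
open scoped ENNReal

section SetEdist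

variable {X : Type*} [PseudoEMetricSpace X]

noncomputable def setEdist (s t : Set X) : ℝ≥0∞ := ⨅ x ∈ s, ⨅ y ∈ t, edist x y

lemma setEdist_le_edist {s t : Set X} {x y : X} (hx : x ∈ s) (hy : y ∈ t) :
    setEdist s t ≤ edist x y :=
  (iInf₂_le x hx).trans (iInf₂_le y hy)

lemma le_setEdist {s t : Set X} {c : ℝ≥0∞} (h : ∀ x ∈ s, ∀ y ∈ t, c ≤ edist x y) :
    c ≤ setEdist s t :=
  le_iInf₂ fun x hx => le_iInf₂ fun y hy => h x hx y hy

lemma setEdist_anti_right {s t t' : Set X} (h : t ⊆ t') : setEdist s t' ≤ setEdist s t :=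
  le_setEdist fun _ hx _ hy => setEdist_le_edist hx (h hy)

lemma setEdist_empty_left (t : Set X) : setEdist ∅ t = ∞ := by
  simp [setEdist]

lemma setEdist_le_add_of_edist_le {s₀ s t : Set X} {x₀ : X} {c : ℝ≥0∞} (hx₀ : x₀ ∈ s₀)
    (hs : ∀ x ∈ s, edist x₀ x ≤ c) : setEdist s₀ t ≤ c + setEdist s t := by
  simp only [setEdist, ENNReal.add_iInf]
  exact le_iInf₂ fun x hx => le_iInf₂ fun y hy =>
    (setEdist_le_edist hx₀ hy).trans ((edist_triangle x₀ x y).trans (by gcongr; exact hs x hx))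

end SetEdist

section UniformlyLocallyFinite

variable {X ι : Type*} [PseudoMetricSpace X] {t : ι → Set X}

lemma finite_setOf_setEdist_le (hcover : ∀ x, ∃ j, x ∈ t j)
    (hfin : ∀ j (ρ : ℝ), 0 < ρ → {k | setEdist (t j) (t k) ≤ ENNReal.ofReal ρ}.Finite)
    {A : Set X} (hA : Bornology.IsBounded A) {c : ℝ≥0∞} (hc : c ≠ ∞) :
    {k | setEdist A (t k) ≤ c}.Finite := by
  rcases A.eq_empty_or_nonempty with rfl | ⟨x₀, hx₀⟩
  · simp [setEdist_empty_left, hc]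
  obtain ⟨j, hj⟩ := hcover x₀
  refine (hfin j (Metric.diam A + c.toReal + 1) (by positivity)).subset fun k hk => ?_
  calc setEdist (t j) (t k)
      ≤ ENNReal.ofReal (Metric.diam A) + setEdist A (t k) :=
        setEdist_le_add_of_edist_le hj fun x hx => by
          rw [edist_dist]; exact ENNReal.ofReal_le_ofReal (Metric.dist_le_diam_of_mem hA hx₀ hx)
    _ ≤ ENNReal.ofReal (Metric.diam A) + ENNReal.ofReal c.toReal := by
        rw [ENNReal.ofReal_toReal hc]; gcongr; exact hk
    _ ≤ ENNReal.ofReal (Metric.diam A + c.toReal + 1) := by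
        rw [← ENNReal.ofReal_add Metric.diam_nonneg ENNReal.toReal_nonneg]
        exact ENNReal.ofReal_le_ofReal (by linarith)

lemma exists_finset_lt_setEdist_biUnion_compl (hcover : ∀ x, ∃ j, x ∈ t j)
    (hfin : ∀ j (ρ : ℝ), 0 < ρ → {k | setEdist (t j) (t k) ≤ ENNReal.ofReal ρ}.Finite)
    {A : Set X} (hA : Bornology.IsBounded A) {a : ℝ≥0∞} (ha : a ≠ ∞) :
    ∃ G : Finset ι, a < setEdist A (⋃ k ∉ G, t k) := by
  have hnear := finite_setOf_setEdist_le hcover hfin hA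
    (ENNReal.add_ne_top.2 ⟨ha, ENNReal.one_ne_top⟩)
  refine ⟨hnear.toFinset, (ENNReal.lt_add_right ha one_ne_zero).trans_le <| le_setEdist ?_⟩
  intro x hx y hy
  obtain ⟨k, hk, hyk⟩ := Set.mem_iUnion₂.1 hy
  rw [Set.Finite.mem_toFinset, Set.mem_ofPred_eq, not_le] at hk
  exact hk.le.trans (setEdist_le_edist hx hyk)

end UniformlyLocallyFinite

lemma exists_mem_support_of_hasSum_one {ι X : Type*} {φ : ι → X → ℝ}
    (hsum : ∀ x, HasSum (fun k => φ k x) 1) (x : X) : ∃ j, x ∈ support (φ j) := by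
  by_contra! h
  simpa using (hsum x).unique
    (hasSum_sum_of_ne_finset_zero (s := ∅) fun k _ => notMem_support.1 (h k))

lemma MeasureTheory.MemLp.ofReal_mul_of_mem_Icc {X : Type*} [MeasurableSpace X] {μ : Measure X}
    {p : ℝ≥0∞} {φ : X → ℝ} {u : X → ℂ} (hu : MemLp u p μ) (hφ : AEStronglyMeasurable φ μ)
    (hφ₁ : ∀ x, φ x ∈ Set.Icc (0 : ℝ) 1) : MemLp (fun x => (φ x : ℂ) * u x) p μ :=
  hu.of_le_mul (c := 1) ((Complex.continuous_ofReal.comp_aestronglyMeasurable hφ).mul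
    hu.aestronglyMeasurable) <| Filter.Eventually.of_forall fun x => by
      rw [norm_mul, Complex.norm_real, Real.norm_eq_abs, abs_of_nonneg (hφ₁ x).1]
      exact mul_le_mul_of_nonneg_right (hφ₁ x).2 (norm_nonneg _)

section Propagation

variable {X : Type*} [MetricSpace X] [MeasurableSpace X] {μ : Measure X}

def IsMulOperatorFamily (μ : Measure X) (M : (X → ℂ) → Lp ℂ 2 μ →L[ℂ] Lp ℂ 2 μ) : Prop :=
  ∀ f : X → ℂ, Measurable f → (∃ C, ∀ x, ‖f x‖ ≤ C) →
    ∀ u : Lp ℂ 2 μ, (M f u : X → ℂ) =ᵐ[μ] fun x => f x * (u : X → ℂ) x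

def HasPropagationAtMost (M : (X → ℂ) → Lp ℂ 2 μ →L[ℂ] Lp ℂ 2 μ)
    (T : Lp ℂ 2 μ →L[ℂ] Lp ℂ 2 μ) (r : ℝ) : Prop :=
  ∀ f f' : X → ℂ, Measurable f → Measurable f' →
    (∃ C, ∀ x, ‖f x‖ ≤ C) → (∃ C, ∀ x, ‖f' x‖ ≤ C) →
    ENNReal.ofReal r < setEdist (support f) (support f') → (M f).comp (T.comp (M f')) = 0

variable {M : (X → ℂ) → Lp ℂ 2 μ →L[ℂ] Lp ℂ 2 μ} {T : Lp ℂ 2 μ →L[ℂ] Lp ℂ 2 μ} {r : ℝ}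
  {f : X → ℂ}

/-- Since `v = M (U.indicator 1) v`, this is the propagation bound for `f` and `U.indicator 1`. -/
lemma apply_eq_zero_of_ae_eq_zero_off (hM : IsMulOperatorFamily μ M)
    (hT : HasPropagationAtMost M T r) (hf : Measurable f) (hf_bdd : ∃ C, ∀ x, ‖f x‖ ≤ C)
    {U : Set X} (hU : MeasurableSet U) (hfar : ENNReal.ofReal r < setEdist (support f) U)
    {v : Lp ℂ 2 μ} (hv : ∀ᵐ x ∂μ, x ∉ U → v x = 0) : M f (T v) = 0 := by
  set g : X → ℂ := U.indicator 1
  have hg : Measurable g := measurable_one.indicator hU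
  have hg_bdd : ∃ C, ∀ x, ‖g x‖ ≤ C := ⟨‖(1 : ℂ)‖, norm_indicator_le_norm_self 1⟩
  have hgv : M g v = v := Lp.ext <| (hM g hg hg_bdd v).trans <| by
    filter_upwards [hv] with x hx
    by_cases hxU : x ∈ U <;> simp [g, hxU, hx]
  have hfg := hT f g hf hg hf_bdd hg_bdd
    (hfar.trans_le (setEdist_anti_right Set.support_indicator_subset))
  rw [← hgv]
  exact DFunLike.congr_fun hfg v

variable [OpensMeasurableSpace X]

lemma apply_toLp_ofReal_mul_eq_zero (hM : IsMulOperatorFamily μ M)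
    (hT : HasPropagationAtMost M T r) (hf : Measurable f) (hf_bdd : ∃ C, ∀ x, ‖f x‖ ≤ C)
    {φ : X → ℝ} (hφ : Continuous φ) (hfar : ENNReal.ofReal r < setEdist (support f) (support φ))
    {u : X → ℂ} (hu : MemLp (fun x => (φ x : ℂ) * u x) 2 μ) : M f (T (hu.toLp _)) = 0 :=
  apply_eq_zero_of_ae_eq_zero_off hM hT hf hf_bdd hφ.isOpen_support.measurableSet hfar <| by
    filter_upwards [hu.coeFn_toLp] with x hx hxφ
    rw [hx, notMem_support.1 hxφ, Complex.ofReal_zero, zero_mul]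

lemma apply_toLp_eq_sum_of_lt_setEdist {ι : Type*} (hM : IsMulOperatorFamily μ M)
    (hT : HasPropagationAtMost M T r) (hf : Measurable f) (hf_bdd : ∃ C, ∀ x, ‖f x‖ ≤ C)
    {φ : ι → X → ℝ} (hφ : ∀ k, Continuous (φ k)) (hsum : ∀ x, HasSum (fun k => φ k x) 1)
    {G : Finset ι} (hG : ENNReal.ofReal r < setEdist (support f) (⋃ k ∉ G, support (φ k)))
    {u : X → ℂ} (hu : MemLp u 2 μ) (hprod : ∀ k, MemLp (fun x => (φ k x : ℂ) * u x) 2 μ) :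
    M f (T (hu.toLp u)) = ∑ k ∈ G, M f (T ((hprod k).toLp _)) := by
  have hU : MeasurableSet (⋃ k ∉ G, support (φ k)) :=
    (isOpen_biUnion fun k _ => (hφ k).isOpen_support).measurableSet
  have hrem : ∀ᵐ x ∂μ, x ∉ ⋃ k ∉ G, support (φ k) →
      (hu.toLp u - ∑ k ∈ G, (hprod k).toLp _ : Lp ℂ 2 μ) x = 0 := by
    filter_upwards [Lp.coeFn_sub (hu.toLp u) (∑ k ∈ G, (hprod k).toLp _), hu.coeFn_toLp,
      Lp.coeFn_fun_finsetSum G fun k => (hprod k).toLp _,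
      (Filter.eventually_all_finset G).2 fun k _ => (hprod k).coeFn_toLp]
      with x hsub hu' hsum' hk hx
    simp only [Set.mem_iUnion, mem_support, not_exists, not_not] at hx
    have hG1 : ∑ k ∈ G, φ k x = 1 := ((hsum x).unique (hasSum_sum_of_ne_finset_zero hx)).symm
    rw [hsub, Pi.sub_apply, hu', hsum', Finset.sum_congr rfl hk, ← Finset.sum_mul,
      ← Complex.ofReal_sum, hG1, Complex.ofReal_one, one_mul, sub_self]
  have h0 := apply_eq_zero_of_ae_eq_zero_off hM hT hf hf_bdd hU hG hrem
  rwa [map_sub, map_sum, map_sub, map_sum, sub_eq_zero] at h0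

lemma support_apply_toLp_ofReal_mul_subset {ι : Type*} (hM : IsMulOperatorFamily μ M)
    (hT : HasPropagationAtMost M T r) (hf : Measurable f) (hf_bdd : ∃ C, ∀ x, ‖f x‖ ≤ C)
    {φ : ι → X → ℝ} (hφ : ∀ k, Continuous (φ k)) {G : Finset ι}
    (hG : ENNReal.ofReal r < setEdist (support f) (⋃ k ∉ G, support (φ k)))
    {u : X → ℂ} (hprod : ∀ k, MemLp (fun x => (φ k x : ℂ) * u x) 2 μ) :
    support (fun k => M f (T ((hprod k).toLp _))) ⊆ G := fun k hk => by
  by_contra hkG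
  exact hk <| apply_toLp_ofReal_mul_eq_zero hM hT hf hf_bdd (hφ k)
    (hG.trans_le <| setEdist_anti_right <|
      Set.subset_biUnion_of_mem (u := fun k => support (φ k)) hkG) _

end Propagation

theorem averaged_operator_partition_independent_general
    {X : Type*} [MetricSpace X] [MeasurableSpace X] [BorelSpace X]
    (μ : Measure X) (r : ℝ)
    (T : Lp ℂ 2 μ →L[ℂ] Lp ℂ 2 μ)
    (M : (X → ℂ) → Lp ℂ 2 μ →L[ℂ] Lp ℂ 2 μ)
    (hM : ∀ f : X → ℂ, Measurable f → (∃ C, ∀ x, ‖f x‖ ≤ C) →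
      ∀ u : Lp ℂ 2 μ, (M f u : X → ℂ) =ᵐ[μ] fun x => f x * (u : X → ℂ) x)
    (hT_prop : ∀ f f' : X → ℂ, Measurable f → Measurable f' →
      (∃ C, ∀ x, ‖f x‖ ≤ C) → (∃ C, ∀ x, ‖f' x‖ ≤ C) →
      ENNReal.ofReal r < (⨅ x ∈ support f, ⨅ y ∈ support f', edist x y) →
      (M f).comp (T.comp (M f')) = 0)
    (ψ ψ' : ℕ → X → ℝ)
    (hψ_cont : ∀ j, Continuous (ψ j)) (hψ'_cont : ∀ k, Continuous (ψ' k))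
    (hψ_01 : ∀ j x, ψ j x ∈ Set.Icc (0 : ℝ) 1) (hψ'_01 : ∀ k x, ψ' k x ∈ Set.Icc (0 : ℝ) 1)
    (hψ_sum : ∀ x, HasSum (fun j => ψ j x) 1) (hψ'_sum : ∀ x, HasSum (fun k => ψ' k x) 1)
    (hψ_fin : ∀ (j : ℕ) (ρ : ℝ), 0 < ρ →
      {k : ℕ | (⨅ x ∈ support (ψ j), ⨅ y ∈ support (ψ k), edist x y) ≤
        ENNReal.ofReal ρ}.Finite)
    (hψ'_fin : ∀ (j : ℕ) (ρ : ℝ), 0 < ρ →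
      {k : ℕ | (⨅ x ∈ support (ψ' j), ⨅ y ∈ support (ψ' k), edist x y) ≤
        ENNReal.ofReal ρ}.Finite)
    (s : X → ℂ)
    (hsL2 : ∀ j, MemLp (fun x => (ψ j x : ℂ) * s x) 2 μ)
    (hsL2' : ∀ k, MemLp (fun x => (ψ' k x : ℂ) * s x) 2 μ)
    (f : X → ℂ) (hf : Measurable f) (hf_bdd : ∃ C, ∀ x, ‖f x‖ ≤ C)
    (hf_supp : Bornology.IsBounded (support f)) :
    {j : ℕ | M f (T (MemLp.toLp (fun x => (ψ j x : ℂ) * s x) (hsL2 j))) ≠ 0}.Finite ∧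
    {k : ℕ | M f (T (MemLp.toLp (fun x => (ψ' k x : ℂ) * s x) (hsL2' k))) ≠ 0}.Finite ∧
    ∑ᶠ j : ℕ, M f (T (MemLp.toLp (fun x => (ψ j x : ℂ) * s x) (hsL2 j))) =
      ∑ᶠ k : ℕ, M f (T (MemLp.toLp (fun x => (ψ' k x : ℂ) * s x) (hsL2' k))) := by
  obtain ⟨G, hG⟩ := exists_finset_lt_setEdist_biUnion_compl (t := fun j => support (ψ j))
    (exists_mem_support_of_hasSum_one hψ_sum) hψ_fin hf_supp ENNReal.ofReal_ne_top
  obtain ⟨G', hG'⟩ := exists_finset_lt_setEdist_biUnion_compl (t := fun k => support (ψ' k))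
    (exists_mem_support_of_hasSum_one hψ'_sum) hψ'_fin hf_supp ENNReal.ofReal_ne_top
  have hsupp := support_apply_toLp_ofReal_mul_subset hM hT_prop hf hf_bdd hψ_cont hG hsL2
  have hsupp' := support_apply_toLp_ofReal_mul_subset hM hT_prop hf hf_bdd hψ'_cont hG' hsL2'
  refine ⟨G.finite_toSet.subset hsupp, G'.finite_toSet.subset hsupp', ?_⟩
  rw [finsum_eq_sum_of_support_subset _ hsupp, finsum_eq_sum_of_support_subset _ hsupp']
  have hprod : ∀ j k, MemLp (fun x => (ψ' k x : ℂ) * ((ψ j x : ℂ) * s x)) 2 μ := fun j k =>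
    (hsL2 j).ofReal_mul_of_mem_Icc (hψ'_cont k).aestronglyMeasurable (hψ'_01 k)
  have hprod' : ∀ k j, MemLp (fun x => (ψ j x : ℂ) * ((ψ' k x : ℂ) * s x)) 2 μ := fun k j =>
    (hsL2' k).ofReal_mul_of_mem_Icc (hψ_cont j).aestronglyMeasurable (hψ_01 j)
  calc ∑ j ∈ G, M f (T ((hsL2 j).toLp _))
      = ∑ j ∈ G, ∑ k ∈ G', M f (T ((hprod j k).toLp _)) := Finset.sum_congr rfl fun j _ =>
        apply_toLp_eq_sum_of_lt_setEdist hM hT_prop hf hf_bdd hψ'_cont hψ'_sum hG' _ _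
    _ = ∑ k ∈ G', ∑ j ∈ G, M f (T ((hprod' k j).toLp _)) := by
        rw [Finset.sum_comm]
        refine Finset.sum_congr rfl fun k _ => Finset.sum_congr rfl fun j _ => ?_
        rw [MemLp.toLp_congr _ (hprod' k j) (.of_forall fun x => mul_left_comm _ _ _)]
    _ = ∑ k ∈ G', M f (T ((hsL2' k).toLp _)) := (Finset.sum_congr rfl fun k _ =>
        apply_toLp_eq_sum_of_lt_setEdist hM hT_prop hf hf_bdd hψ_cont hψ_sum hG _ _).symm

/-- Let `T` be a bounded operator on `L²(X,μ)` of propagation at most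
`r` (expressed via multiplication operators `M f`), and let `{ψ_j}`, `{ψ'_k}` be two
partitions of unity whose members have uniformly locally finite families of supports.
For a Borel `s` with `ψ_j·s, ψ'_k·s ∈ L²`, and any bounded Borel `f` with bounded
nonempty support, only finitely many of the elements `M f (T (ψ_j·s))` are nonzero and
the resulting finite sums for the two partitions agree: the averaged operator applied to
`s`, localised by `f`, is independent of the partition of unity. -/
theorem averaged_operator_partition_independent
    {X : Type*} [MetricSpace X] [MeasurableSpace X] [BorelSpace X]
    (μ : Measure X) (r : ℝ) (hr : 0 < r)
    (T : Lp ℂ 2 μ →L[ℂ] Lp ℂ 2 μ)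
    (M : (X → ℂ) → Lp ℂ 2 μ →L[ℂ] Lp ℂ 2 μ)
    (hM : ∀ f : X → ℂ, Measurable f → (∃ C, ∀ x, ‖f x‖ ≤ C) →
      ∀ u : Lp ℂ 2 μ, (M f u : X → ℂ) =ᵐ[μ] fun x => f x * (u : X → ℂ) x)
    (hT_prop : ∀ f f' : X → ℂ, Measurable f → Measurable f' →
      (∃ C, ∀ x, ‖f x‖ ≤ C) → (∃ C, ∀ x, ‖f' x‖ ≤ C) →
      ENNReal.ofReal r < (⨅ x ∈ support f, ⨅ y ∈ support f', edist x y) →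
      (M f).comp (T.comp (M f')) = 0)
    (ψ ψ' : ℕ → X → ℝ)
    (hψ_cont : ∀ j, Continuous (ψ j)) (hψ'_cont : ∀ k, Continuous (ψ' k))
    (hψ_01 : ∀ j x, ψ j x ∈ Set.Icc (0 : ℝ) 1) (hψ'_01 : ∀ k x, ψ' k x ∈ Set.Icc (0 : ℝ) 1)
    (hψ_sum : ∀ x, HasSum (fun j => ψ j x) 1) (hψ'_sum : ∀ x, HasSum (fun k => ψ' k x) 1)
    (hψ_fin : ∀ (j : ℕ) (ρ : ℝ), 0 < ρ →
      {k : ℕ | (⨅ x ∈ support (ψ j), ⨅ y ∈ support (ψ k), edist x y) ≤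
        ENNReal.ofReal ρ}.Finite)
    (hψ'_fin : ∀ (j : ℕ) (ρ : ℝ), 0 < ρ →
      {k : ℕ | (⨅ x ∈ support (ψ' j), ⨅ y ∈ support (ψ' k), edist x y) ≤
        ENNReal.ofReal ρ}.Finite)
    (s : X → ℂ) (hs : Measurable s)
    (hsL2 : ∀ j, MemLp (fun x => (ψ j x : ℂ) * s x) 2 μ)
    (hsL2' : ∀ k, MemLp (fun x => (ψ' k x : ℂ) * s x) 2 μ)
    (f : X → ℂ) (hf : Measurable f) (hf_bdd : ∃ C, ∀ x, ‖f x‖ ≤ C)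
    (hf_supp : Bornology.IsBounded (support f)) (hf_ne : (support f).Nonempty) :
    {j : ℕ | M f (T (MemLp.toLp (fun x => (ψ j x : ℂ) * s x) (hsL2 j))) ≠ 0}.Finite ∧
    {k : ℕ | M f (T (MemLp.toLp (fun x => (ψ' k x : ℂ) * s x) (hsL2' k))) ≠ 0}.Finite ∧
    ∑ᶠ j : ℕ, M f (T (MemLp.toLp (fun x => (ψ j x : ℂ) * s x) (hsL2 j))) =
      ∑ᶠ k : ℕ, M f (T (MemLp.toLp (fun x => (ψ' k x : ℂ) * s x) (hsL2' k))) :=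
  averaged_operator_partition_independent_general μ r T M hM hT_prop ψ ψ' hψ_cont hψ'_cont hψ_01
    hψ'_01 hψ_sum hψ'_sum hψ_fin hψ'_fin s hsL2 hsL2' f hf hf_bdd hf_supp
end

section
/- Let κ be a bounded Borel G-equivariant kernel of propagation at most r, let {ψ_j}_{j∈ℕ} be a family of continuous functions X → [0,1] summing pointwise to 1 and such that for every j and every ρ > 0 the set {k : d(supp ψ_j, supp ψ_k) ≤ ρ} is finite, and let s : X → ℂ be a Borel G-invariant function (s(g·x) = s(x) for all g, x) that is μ-integrable on every bounded Borel subset of X. Then for every x ∈ X: (i) the integral I_j(x) := ∫_X κ(x,x')·ψ_j(x')·s(x') dμ(x') is well defined for every j and vanishes for all but finitely many j; and (ii) Σ_j I_j(x) = ∫_{X/G} Av(κ)(x, s₀(ω)) · s(s₀(ω)) dν(ω). That is, the average over the partition of unity of the integral operator with equivariant kernel κ, applied to the G-invariant section s, is the integral operator over the orbit space with the averaged kernel Av(κ). -/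
open MeasureTheory Function Metric

/-! Since `κ` has propagation `r`, only the ball `B(x, r)` matters. Only finitely many `ψ_j` meet
that ball, so `Σ_j I_j(x)` is a finite sum which can be moved under the integral, where the `ψ_j`
add up to `1`; what is left is `∫ κ(x,x') s(x') dμ(x')`. Weil's formula writes this as an
integral over orbits, and on the orbit of `y` equivariance of `κ` and invariance of `s` give
`κ(x, g·y) s(g·y) = κ(g⁻¹·x, y) s(y)`. -/

section Integrability

variable {X R : Type*} [MeasurableSpace X] {μ : Measure X} [NormedRing R]

theorem IntegrableOn.integrable_bdd_mul_of_support_subset {b s : X → R} {B : Set X} {C : ℝ}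
    (hs : IntegrableOn s B μ) (hb : AEStronglyMeasurable b μ) (hb_bdd : ∀ x, ‖b x‖ ≤ C)
    (hb_supp : support b ⊆ B) : Integrable (fun x => b x * s x) μ :=
  (integrableOn_iff_integrable_of_support_subset
    ((support_mul_subset_left b s).trans hb_supp)).1
    (hs.bdd_mul hb.restrict (.of_forall hb_bdd))

end Integrability

section PartitionOfUnity

variable {ι X : Type*}

theorem finite_setOf_support_inter_closedBall_nonempty [PseudoMetricSpace X] {M : Type*} [Zero M]
    {ψ : ι → X → M} {j : ι} {x : X} (hx : ψ j x ≠ 0) (r : ℝ)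
    (hψ_fin : {k | (⨅ y ∈ support (ψ j), ⨅ z ∈ support (ψ k), edist y z) ≤
      ENNReal.ofReal r}.Finite) :
    {k | (support (ψ k) ∩ closedBall x r).Nonempty}.Finite := by
  refine hψ_fin.subset ?_
  rintro k ⟨x', hx'k, hx'x⟩
  calc (⨅ y ∈ support (ψ j), ⨅ z ∈ support (ψ k), edist y z) ≤ edist x x' :=
        (iInf₂_le x hx).trans (iInf₂_le x' hx'k)
    _ ≤ ENNReal.ofReal r := by
        rw [edist_dist, dist_comm]
        exact ENNReal.ofReal_le_ofReal hx'x

variable {ψ : ι → X → ℝ} {B : Set X} {k s : X → ℂ}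

theorem mul_ofReal_mul_eq_zero_of_not_nonempty (hk : support k ⊆ B) {j : ι}
    (hj : ¬(support (ψ j) ∩ B).Nonempty) : (fun x => k x * (ψ j x : ℂ) * s x) = 0 := by
  funext x
  by_cases hx : x ∈ B
  · have : ψ j x = 0 := by_contra fun h => hj ⟨x, h, hx⟩
    simp [this]
  · simp [notMem_support.1 fun h => hx (hk h)]

theorem finsum_integral_mul_ofReal_mul_eq_integral_mul [MeasurableSpace X] {μ : Measure X}
    (hk : support k ⊆ B) (hF : {j | (support (ψ j) ∩ B).Nonempty}.Finite)
    (hψ_sum : ∀ x, HasSum (fun j => ψ j x) 1)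
    (hint : ∀ j, Integrable (fun x => k x * (ψ j x : ℂ) * s x) μ) :
    ∑ᶠ j, ∫ x, k x * (ψ j x : ℂ) * s x ∂μ = ∫ x, k x * s x ∂μ := by
  have hzero : ∀ j ∉ hF.toFinset, (fun x => k x * (ψ j x : ℂ) * s x) = 0 := fun j hj =>
    mul_ofReal_mul_eq_zero_of_not_nonempty hk (by simpa using hj)
  rw [finsum_eq_sum_of_support_subset _ fun j hj => by_contra fun h => hj (by simp [hzero j h]),
    ← integral_finsetSum _ fun j _ => hint j]
  refine integral_congr_ae (.of_forall fun x => ?_)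
  by_cases hx : x ∈ B
  · have hψ_one : ∑ j ∈ hF.toFinset, ψ j x = 1 := by
      rw [← (hψ_sum x).tsum_eq]
      exact (tsum_eq_sum fun j hj => by_contra fun h => hj (hF.mem_toFinset.2 ⟨x, h, hx⟩)).symm
    calc ∑ j ∈ hF.toFinset, k x * (ψ j x : ℂ) * s x
        = k x * ((∑ j ∈ hF.toFinset, ψ j x : ℝ) : ℂ) * s x := by
          rw [Complex.ofReal_sum, Finset.mul_sum, Finset.sum_mul]
      _ = k x * s x := by rw [hψ_one, Complex.ofReal_one, mul_one]
  · simp [notMem_support.1 fun h => hx (hk h)]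

end PartitionOfUnity

section Averaging

variable {G X : Type*} [Group G] [MulAction G X] [MeasurableSpace G] {μG : Measure G}
  {κ : X × X → ℂ} {s : X → ℂ}

theorem integral_kernel_smul_mul_eq_average_mul
    (hκ_equiv : ∀ (g : G) (x x' : X), κ (g • x, g • x') = κ (x, x'))
    (hs_inv : ∀ (g : G) (x : X), s (g • x) = s x) (x y : X) :
    ∫ g, κ (x, g • y) * s (g • y) ∂μG = (∫ g, κ (g⁻¹ • x, y) ∂μG) * s y := by
  have hκ : ∀ g : G, κ (x, g • y) = κ (g⁻¹ • x, y) := fun g => by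
    rw [← hκ_equiv g⁻¹, inv_smul_smul]
  simp only [hκ, hs_inv, integral_mul_const]

end Averaging

theorem averaged_operator_on_invariant_section_general
    {G X : Type*}
    [Group G]
    [MeasurableSpace G]
    (μG : Measure G)
    [MetricSpace X] [MeasurableSpace X] [BorelSpace X]
    [MulAction G X]
    (μ : Measure X)
    [MeasurableSpace (Quotient (MulAction.orbitRel G X))]
    (ν : Measure (Quotient (MulAction.orbitRel G X)))
    (s₀ : Quotient (MulAction.orbitRel G X) → X)
    (hWeil : ∀ φ : X → ℂ, Integrable φ μ →
      ∫ x, φ x ∂μ = ∫ ω, ∫ g, φ (g • s₀ ω) ∂μG ∂ν)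
    (κ : X × X → ℂ) (r : ℝ)
    (hκ_meas : Measurable κ)
    (hκ_bdd : ∃ C, ∀ p, ‖κ p‖ ≤ C)
    (hκ_equiv : ∀ (g : G) (x x' : X), κ (g • x, g • x') = κ (x, x'))
    (hκ_prop : ∀ x x' : X, r < dist x x' → κ (x, x') = 0)
    (ψ : ℕ → X → ℝ)
    (hψ_cont : ∀ j, Continuous (ψ j))
    (hψ_01 : ∀ j x, ψ j x ∈ Set.Icc (0 : ℝ) 1)
    (hψ_sum : ∀ x, HasSum (fun j => ψ j x) 1)
    (hψ_fin : ∀ (j : ℕ) (ρ : ℝ), 0 < ρ →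
      {k : ℕ | (⨅ x ∈ support (ψ j), ⨅ y ∈ support (ψ k), edist x y) ≤
        ENNReal.ofReal ρ}.Finite)
    (s : X → ℂ)
    (hs_inv : ∀ (g : G) (x : X), s (g • x) = s x)
    (hs_int : ∀ B : Set X, Bornology.IsBounded B → IntegrableOn s B μ) :
    ∀ x : X,
      (∀ j : ℕ, Integrable (fun x' : X => κ (x, x') * (ψ j x' : ℂ) * s x') μ) ∧
      {j : ℕ | ∫ x' : X, κ (x, x') * (ψ j x' : ℂ) * s x' ∂μ ≠ 0}.Finite ∧
      ∑ᶠ j : ℕ, ∫ x' : X, κ (x, x') * (ψ j x' : ℂ) * s x' ∂μ =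
        ∫ ω, (∫ g : G, κ (g⁻¹ • x, s₀ ω) ∂μG) * s (s₀ ω) ∂ν := by
  obtain ⟨C, hC⟩ := hκ_bdd
  intro x
  -- the finiteness hypothesis on `ψ` is only available for positive radii
  set B := closedBall x (max r 1)
  have hrow : support (fun x' => κ (x, x')) ⊆ B := fun x' hx' =>
    closedBall_subset_closedBall (le_max_left r 1)
      (by rw [mem_closedBall, dist_comm]; exact not_lt.1 (mt (hκ_prop x x') hx'))
  have hint : ∀ c : X → ℂ, Measurable c → (∀ y, ‖c y‖ ≤ 1) →
      Integrable (fun x' => κ (x, x') * c x' * s x') μ := fun c hc hc_bdd =>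
    IntegrableOn.integrable_bdd_mul_of_support_subset (hs_int B isBounded_closedBall)
      ((hκ_meas.comp measurable_prodMk_left).mul hc).aestronglyMeasurable
      (fun x' => (norm_mul_le _ _).trans
        (mul_le_of_le_one_right (norm_nonneg _) (hc_bdd x') |>.trans (hC _)))
      ((support_mul_subset_left _ _).trans hrow)
  have hint_ψ : ∀ j, Integrable (fun x' => κ (x, x') * (ψ j x' : ℂ) * s x') μ := fun j =>
    hint _ (hψ_cont j).measurable.complex_ofReal fun x' => by
      rw [Complex.norm_real, Real.norm_of_nonneg (hψ_01 j x').1]; exact (hψ_01 j x').2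
  obtain ⟨j₀, hj₀⟩ : ∃ j, ψ j x ≠ 0 := by
    by_contra! h
    exact one_ne_zero ((hψ_sum x).unique (by simp [h]))
  have hF := finite_setOf_support_inter_closedBall_nonempty hj₀ (max r 1)
    (hψ_fin j₀ _ (lt_max_of_lt_right one_pos))
  refine ⟨hint_ψ, hF.subset fun j hj => by_contra fun hjF => hj ?_, ?_⟩
  · rw [mul_ofReal_mul_eq_zero_of_not_nonempty hrow hjF, Pi.zero_def, integral_zero]
  calc ∑ᶠ j, ∫ x', κ (x, x') * (ψ j x' : ℂ) * s x' ∂μ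
        = ∫ x', κ (x, x') * s x' ∂μ :=
        finsum_integral_mul_ofReal_mul_eq_integral_mul hrow hF hψ_sum hint_ψ
    _ = ∫ ω, ∫ g, κ (x, g • s₀ ω) * s (g • s₀ ω) ∂μG ∂ν :=
        hWeil _ (by
          simpa only [Pi.one_apply, mul_one] using hint 1 measurable_const fun _ => norm_one.le)
    _ = ∫ ω, (∫ g, κ (g⁻¹ • x, s₀ ω) ∂μG) * s (s₀ ω) ∂ν := by
        simp only [integral_kernel_smul_mul_eq_average_mul hκ_equiv hs_inv]

/-- Averaging the integral operator with `G`-equivariant kernel `κ` over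
a suitable partition of unity `{ψ_j}` and applying it to a `G`-invariant section `s`
yields the integral operator over the orbit space with the averaged kernel `Av(κ)`:
each `I_j(x) = ∫_X κ(x,x') ψ_j(x') s(x') dμ(x')` is well defined, vanishes for all but
finitely many `j`, and `Σ_j I_j(x) = ∫_{X/G} Av(κ)(x, s₀(ω)) s(s₀(ω)) dν(ω)`. -/
theorem averaged_operator_on_invariant_section
    {G X : Type*}
    [Group G] [TopologicalSpace G] [IsTopologicalGroup G] [LocallyCompactSpace G] [T2Space G]
    [MeasurableSpace G] [BorelSpace G]
    (μG : Measure G) [μG.IsHaarMeasure] [μG.IsMulRightInvariant] [μG.IsInvInvariant]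
    [MetricSpace X] [ProperSpace X] [MeasurableSpace X] [BorelSpace X]
    [MulAction G X] [ContinuousSMul G X]
    (hiso : ∀ (g : G) (x y : X), dist (g • x) (g • y) = dist x y)
    (hproper : IsProperMap fun p : G × X => (p.1 • p.2, p.2))
    (μ : Measure X) [SMulInvariantMeasure G X μ] [IsLocallyFiniteMeasure μ]
    [MeasurableSpace (Quotient (MulAction.orbitRel G X))]
    (ν : Measure (Quotient (MulAction.orbitRel G X)))
    (s₀ : Quotient (MulAction.orbitRel G X) → X)
    (hs₀_meas : Measurable s₀)
    (hs₀_sec : ∀ ω, Quotient.mk (MulAction.orbitRel G X) (s₀ ω) = ω)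
    (hWeil : ∀ φ : X → ℂ, Integrable φ μ →
      ∫ x, φ x ∂μ = ∫ ω, ∫ g, φ (g • s₀ ω) ∂μG ∂ν)
    (κ : X × X → ℂ) (r : ℝ)
    (hκ_meas : Measurable κ)
    (hκ_bdd : ∃ C, ∀ p, ‖κ p‖ ≤ C)
    (hκ_equiv : ∀ (g : G) (x x' : X), κ (g • x, g • x') = κ (x, x'))
    (hκ_prop : ∀ x x' : X, r < dist x x' → κ (x, x') = 0)
    (ψ : ℕ → X → ℝ)
    (hψ_cont : ∀ j, Continuous (ψ j))
    (hψ_01 : ∀ j x, ψ j x ∈ Set.Icc (0 : ℝ) 1)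
    (hψ_sum : ∀ x, HasSum (fun j => ψ j x) 1)
    (hψ_fin : ∀ (j : ℕ) (ρ : ℝ), 0 < ρ →
      {k : ℕ | (⨅ x ∈ support (ψ j), ⨅ y ∈ support (ψ k), edist x y) ≤
        ENNReal.ofReal ρ}.Finite)
    (s : X → ℂ) (hs_meas : Measurable s)
    (hs_inv : ∀ (g : G) (x : X), s (g • x) = s x)
    (hs_int : ∀ B : Set X, Bornology.IsBounded B → IntegrableOn s B μ) :
    ∀ x : X,
      (∀ j : ℕ, Integrable (fun x' : X => κ (x, x') * (ψ j x' : ℂ) * s x') μ) ∧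
      {j : ℕ | ∫ x' : X, κ (x, x') * (ψ j x' : ℂ) * s x' ∂μ ≠ 0}.Finite ∧
      ∑ᶠ j : ℕ, ∫ x' : X, κ (x, x') * (ψ j x' : ℂ) * s x' ∂μ =
        ∫ ω, (∫ g : G, κ (g⁻¹ • x, s₀ ω) ∂μG) * s (s₀ ω) ∂ν :=
  averaged_operator_on_invariant_section_general μG μ ν s₀ hWeil κ r hκ_meas hκ_bdd hκ_equiv hκ_prop
    ψ hψ_cont hψ_01 hψ_sum hψ_fin s hs_inv hs_int
end

section
/- Let (X,d) be a metric space on which the group G acts by isometries, let μ be a G-invariant Borel measure on X, and let T be a bounded operator on L²(X,μ) of propagation at most r that commutes with every translation operator U_g, where (U_g u)(x) = u(g⁻¹·x). Let {ψ_j}_{j∈ℕ} be a family of continuous functions X → [0,1] summing pointwise to 1 and such that for every j and every ρ > 0 the set {k : d(supp ψ_j, supp ψ_k) ≤ ρ} is finite. Let s : X → ℂ be Borel and G-invariant (s(g·x) = s(x) for all g, x) with ψ_j·s ∈ L²(X,μ) for all j. Then for every h ∈ G and every bounded Borel f : X → ℂ with bounded nonempty support, Σ_j f·U_h(T(ψ_j·s))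 = Σ_j f·T(ψ_j·s) in L²(X,μ), both sums having only finitely many nonzero terms. That is, the averaged section Σ_j T(ψ_j·s) is G-invariant. -/
/-! Let `N` be the closed `(r + 1)`-thickening of the bounded set `supp f`. Since `T` has
propagation `r`, `M f ∘ T` only sees the restriction of its argument to `N`. For a partition of
unity `φ` with uniformly locally finite supports, only finitely many `supp φ_j` meet `N`, so only
finitely many `M f (T (φ_j s))` are nonzero, and since `∑ φ_j = 1` on `N` they add up to
`M f (T (1_N s))`. The same holds for the translated partition `ψ_j (h⁻¹ • ·)`, whose terms are
`U_h (ψ_j s)` because `s` is invariant; as `U_h` commutes with `T`, both sums equal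
`M f (T (1_N s))`. -/

open MeasureTheory Function Metric Set Bornology

lemma exists_ne_zero_of_hasSum_one {ι : Type*} {a : ι → ℝ} (h : HasSum a 1) : ∃ j, a j ≠ 0 := by
  by_contra! hzero
  exact one_ne_zero ((funext hzero ▸ h).unique hasSum_zero)

section PartitionOfUnity

variable {X ι : Type*} {φ : ι → X → ℝ}

lemma finite_setOf_support_inter_nonempty [MetricSpace X]
    (hsum : ∀ x, HasSum (fun j => φ j x) 1)
    (hfin : ∀ (j : ι) (ρ : ℝ), 0 < ρ →
      {k | (⨅ x ∈ support (φ j), ⨅ y ∈ support (φ k), edist x y) ≤ ENNReal.ofReal ρ}.Finite)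
    {B : Set X} (hB : IsBounded B) : {k | (support (φ k) ∩ B).Nonempty}.Finite := by
  rcases B.eq_empty_or_nonempty with rfl | ⟨x₀, hx₀⟩
  · simp
  obtain ⟨j₀, hj₀⟩ := exists_ne_zero_of_hasSum_one (hsum x₀)
  obtain ⟨ρ, hρ, hB⟩ := hB.subset_closedBall_lt 0 x₀
  refine (hfin j₀ ρ hρ).subset fun k ⟨y, hyk, hyB⟩ => ?_
  calc (⨅ x ∈ support (φ j₀), ⨅ y ∈ support (φ k), edist x y) ≤ edist x₀ y :=
        iInf₂_le_of_le x₀ hj₀ (iInf₂_le y hyk)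
    _ ≤ ENNReal.ofReal ρ := by
        rw [edist_dist, dist_comm]
        exact ENNReal.ofReal_le_ofReal (mem_closedBall.mp (hB hyB))

lemma sum_apply_eq_one_of_subset {x : X} (hsum : HasSum (fun j => φ j x) 1) {J : Finset ι}
    (hJ : {j | x ∈ support (φ j)} ⊆ J) : ∑ j ∈ J, φ j x = 1 :=
  (hasSum_sum_of_ne_finset_zero fun _ hj => not_not.mp fun hne => hj (hJ hne)).unique hsum

end PartitionOfUnity

lemma ofReal_le_iInf_edist_compl_cthickening {X : Type*} [PseudoEMetricSpace X] (S : Set X)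
    (δ : ℝ) : ENNReal.ofReal δ ≤ ⨅ x ∈ S, ⨅ y ∈ (cthickening δ S)ᶜ, edist x y :=
  le_iInf₂ fun _ hx => le_iInf₂ fun _ hy =>
    (not_le.mp fun h => hy (mem_cthickening_iff.mpr h)).le.trans ((infEDist_le_edist_of_mem hx).trans_eq (edist_comm _ _))

lemma exists_norm_indicator_one_le {X : Type*} (N : Set X) :
    ∃ C, ∀ x, ‖N.indicator (1 : X → ℂ) x‖ ≤ C :=
  ⟨1, fun x => (norm_indicator_le_norm_self _ _).trans (by simp)⟩

section Operators

variable {X : Type*} [MeasurableSpace X] {μ : Measure X}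
  {M : (X → ℂ) → Lp ℂ 2 μ →L[ℂ] Lp ℂ 2 μ} {T : Lp ℂ 2 μ →L[ℂ] Lp ℂ 2 μ}

lemma coeFn_mul_indicator_one
    (hM : ∀ f : X → ℂ, Measurable f → (∃ C, ∀ x, ‖f x‖ ≤ C) →
      ∀ u : Lp ℂ 2 μ, (M f u : X → ℂ) =ᵐ[μ] fun x => f x * (u : X → ℂ) x)
    {N : Set X} (hN : MeasurableSet N) (u : Lp ℂ 2 μ) :
    (M (N.indicator 1) u : X → ℂ) =ᵐ[μ] N.indicator u := by
  filter_upwards [hM (N.indicator 1) (measurable_const.indicator hN) (exists_norm_indicator_one_le N) u]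
    with x hx
  rw [hx]
  by_cases hxN : x ∈ N <;> simp [hxN]

variable [MetricSpace X] [BorelSpace X] {r : ℝ}

lemma mul_apply_eq_mul_apply_indicator_cthickening
    (hM : ∀ f : X → ℂ, Measurable f → (∃ C, ∀ x, ‖f x‖ ≤ C) →
      ∀ u : Lp ℂ 2 μ, (M f u : X → ℂ) =ᵐ[μ] fun x => f x * (u : X → ℂ) x)
    (hT_prop : ∀ f f' : X → ℂ, Measurable f → Measurable f' →
      (∃ C, ∀ x, ‖f x‖ ≤ C) → (∃ C, ∀ x, ‖f' x‖ ≤ C) →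
      ENNReal.ofReal r < (⨅ x ∈ support f, ⨅ y ∈ support f', edist x y) →
      (M f).comp (T.comp (M f')) = 0)
    {f : X → ℂ} (hf : Measurable f) (hf_bdd : ∃ C, ∀ x, ‖f x‖ ≤ C)
    {ρ : ℝ} (hρ : ENNReal.ofReal r < ENNReal.ofReal ρ) (u : Lp ℂ 2 μ) :
    M f (T u) = M f (T (M ((cthickening ρ (support f)).indicator 1) u)) := by
  set N := cthickening ρ (support f)
  have hN : MeasurableSet N := isClosed_cthickening.measurableSet
  have hfar : M f (T (M (Nᶜ.indicator 1) u)) = 0 := by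
    refine congr($(hT_prop _ _ hf (measurable_const.indicator hN.compl) hf_bdd
      (exists_norm_indicator_one_le _) (hρ.trans_le ?_)) u)
    exact (ofReal_le_iInf_edist_compl_cthickening _ ρ).trans <|
      iInf₂_mono fun _ _ => biInf_mono fun _ hy => support_indicator_subset hy
  have hsplit : M (N.indicator 1) u + M (Nᶜ.indicator 1) u = u := by
    refine Lp.ext ?_
    filter_upwards [Lp.coeFn_add (M (N.indicator 1) u) _, coeFn_mul_indicator_one hM hN u,
      coeFn_mul_indicator_one hM hN.compl u] with x hadd hin hout
    rw [hadd, Pi.add_apply, hin, hout, indicator_self_add_compl_apply]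
  conv_lhs => rw [← hsplit]
  rw [map_add, map_add, hfar, add_zero]

lemma exists_finsum_mul_apply_eq_mul_apply_indicator
    (hM : ∀ f : X → ℂ, Measurable f → (∃ C, ∀ x, ‖f x‖ ≤ C) →
      ∀ u : Lp ℂ 2 μ, (M f u : X → ℂ) =ᵐ[μ] fun x => f x * (u : X → ℂ) x)
    (hT_prop : ∀ f f' : X → ℂ, Measurable f → Measurable f' →
      (∃ C, ∀ x, ‖f x‖ ≤ C) → (∃ C, ∀ x, ‖f' x‖ ≤ C) →
      ENNReal.ofReal r < (⨅ x ∈ support f, ⨅ y ∈ support f', edist x y) →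
      (M f).comp (T.comp (M f')) = 0)
    {f : X → ℂ} (hf : Measurable f) (hf_bdd : ∃ C, ∀ x, ‖f x‖ ≤ C)
    {ρ : ℝ} (hρ : ENNReal.ofReal r < ENNReal.ofReal ρ)
    {ι : Type*} {φ : ι → X → ℝ} (hsum : ∀ x, HasSum (fun j => φ j x) 1)
    (hloc : {j | (support (φ j) ∩ cthickening ρ (support f)).Nonempty}.Finite)
    {s : X → ℂ} {v : ι → Lp ℂ 2 μ} (hv : ∀ j, v j =ᵐ[μ] fun x => (φ j x : ℂ) * s x) :
    ∃ w : Lp ℂ 2 μ, w =ᵐ[μ] (cthickening ρ (support f)).indicator s ∧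
      {j | M f (T (v j)) ≠ 0}.Finite ∧ ∑ᶠ j, M f (T (v j)) = M f (T w) := by
  set N := cthickening ρ (support f)
  have hN : MeasurableSet N := isClosed_cthickening.measurableSet
  set J := hloc.toFinset
  have hlocal := mul_apply_eq_mul_apply_indicator_cthickening hM hT_prop hf hf_bdd hρ
  have hcut : ∀ j, (M (N.indicator 1) (v j) : X → ℂ) =ᵐ[μ] N.indicator fun x => φ j x * s x :=
    fun j => by
      filter_upwards [coeFn_mul_indicator_one hM hN (v j), hv j] with x hcut hvx
      by_cases hxN : x ∈ N <;> simp [hcut, hxN, hvx]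
  have hvanish : ∀ j ∉ J, M f (T (v j)) = 0 := by
    intro j hj
    suffices M (N.indicator 1) (v j) = 0 by rw [hlocal, this, map_zero, map_zero]
    refine Lp.ext ((hcut j).trans (Filter.Eventually.of_forall fun x => ?_) |>.trans
      (Lp.coeFn_zero ℂ 2 μ).symm)
    by_cases hxN : x ∈ N
    · have hφ : φ j x = 0 := not_not.mp fun hne => hj (hloc.mem_toFinset.mpr ⟨x, hne, hxN⟩)
      simp [hxN, hφ]
    · simp [hxN]
  have hsupp : support (fun j => M f (T (v j))) ⊆ J := fun j hj =>
    not_not.mp fun hjJ => hj (hvanish j hjJ)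
  refine ⟨∑ j ∈ J, M (N.indicator 1) (v j), ?_, J.finite_toSet.subset hsupp, ?_⟩
  · filter_upwards [Lp.coeFn_fun_finsetSum J fun j => M (N.indicator 1) (v j), (Filter.eventually_all_finset J).mpr
      fun j _ => hcut j] with x hsum_x hcut_x
    rw [hsum_x, Finset.sum_congr rfl hcut_x]
    by_cases hxN : x ∈ N
    · have hone : ∑ j ∈ J, φ j x = 1 :=
        sum_apply_eq_one_of_subset (hsum x) fun j hj => hloc.mem_toFinset.mpr ⟨x, hj, hxN⟩
      simp only [indicator_of_mem hxN, ← Finset.sum_mul, ← Complex.ofReal_sum, hone,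
        Complex.ofReal_one, one_mul]
    · simp [hxN]
  · rw [finsum_eq_sum_of_support_subset _ hsupp, map_sum, map_sum]
    exact Finset.sum_congr rfl fun j _ => hlocal (v j)

end Operators

lemma coeFn_apply_toLp_ae_eq_comp_smul {G X : Type*} [Group G] [MeasurableSpace X]
    [MulAction G X] [MeasurableConstSMul G X] {μ : Measure X} [SMulInvariantMeasure G X μ]
    {U : G → Lp ℂ 2 μ →L[ℂ] Lp ℂ 2 μ}
    (hU : ∀ (g : G) (u : Lp ℂ 2 μ), (U g u : X → ℂ) =ᵐ[μ] fun x => (u : X → ℂ) (g⁻¹ • x))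
    (g : G) {u : X → ℂ} (hu : MemLp u 2 μ) :
    (U g (hu.toLp u) : X → ℂ) =ᵐ[μ] fun x => u (g⁻¹ • x) :=
  (hU g _).trans ((measurePreserving_smul g⁻¹ μ).quasiMeasurePreserving.ae_eq_comp hu.coeFn_toLp)

theorem averaged_operator_section_G_invariant_general
    {G X : Type*}
    [Group G]
    [MetricSpace X] [MeasurableSpace X] [BorelSpace X]
    [MulAction G X]
    (hiso : ∀ (g : G) (x y : X), dist (g • x) (g • y) = dist x y)
    (μ : Measure X) [SMulInvariantMeasure G X μ]
    (r : ℝ) (hr : 0 < r)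
    (T : Lp ℂ 2 μ →L[ℂ] Lp ℂ 2 μ)
    (M : (X → ℂ) → Lp ℂ 2 μ →L[ℂ] Lp ℂ 2 μ)
    (hM : ∀ f : X → ℂ, Measurable f → (∃ C, ∀ x, ‖f x‖ ≤ C) →
      ∀ u : Lp ℂ 2 μ, (M f u : X → ℂ) =ᵐ[μ] fun x => f x * (u : X → ℂ) x)
    (U : G → Lp ℂ 2 μ →L[ℂ] Lp ℂ 2 μ)
    (hU : ∀ (g : G) (u : Lp ℂ 2 μ),
      (U g u : X → ℂ) =ᵐ[μ] fun x => (u : X → ℂ) (g⁻¹ • x))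
    (hT_prop : ∀ f f' : X → ℂ, Measurable f → Measurable f' →
      (∃ C, ∀ x, ‖f x‖ ≤ C) → (∃ C, ∀ x, ‖f' x‖ ≤ C) →
      ENNReal.ofReal r < (⨅ x ∈ support f, ⨅ y ∈ support f', edist x y) →
      (M f).comp (T.comp (M f')) = 0)
    (hTU : ∀ g : G, (U g).comp T = T.comp (U g))
    (ψ : ℕ → X → ℝ)
    (hψ_sum : ∀ x, HasSum (fun j => ψ j x) 1)
    (hψ_fin : ∀ (j : ℕ) (ρ : ℝ), 0 < ρ →
      {k : ℕ | (⨅ x ∈ support (ψ j), ⨅ y ∈ support (ψ k), edist x y) ≤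
        ENNReal.ofReal ρ}.Finite)
    (s : X → ℂ)
    (hs_inv : ∀ (g : G) (x : X), s (g • x) = s x)
    (hsL2 : ∀ j, MemLp (fun x => (ψ j x : ℂ) * s x) 2 μ) :
    ∀ (h : G) (f : X → ℂ), Measurable f → (∃ C, ∀ x, ‖f x‖ ≤ C) →
      Bornology.IsBounded (support f) → (support f).Nonempty →
      {j : ℕ | M f (U h (T (MemLp.toLp (fun x => (ψ j x : ℂ) * s x) (hsL2 j)))) ≠ 0}.Finite ∧
      {j : ℕ | M f (T (MemLp.toLp (fun x => (ψ j x : ℂ) * s x) (hsL2 j))) ≠ 0}.Finite ∧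
      ∑ᶠ j : ℕ, M f (U h (T (MemLp.toLp (fun x => (ψ j x : ℂ) * s x) (hsL2 j)))) =
        ∑ᶠ j : ℕ, M f (T (MemLp.toLp (fun x => (ψ j x : ℂ) * s x) (hsL2 j))) := by
  intro h f hf hf_bdd hf_supp _
  have : IsIsometricSMul G X := ⟨fun g => Isometry.of_dist_eq (hiso g)⟩
  have hρ : ENNReal.ofReal r < ENNReal.ofReal (r + 1) :=
    (ENNReal.ofReal_lt_ofReal_iff (by linarith)).mpr (by linarith)
  have hN : IsBounded (cthickening (r + 1) (support f)) := hf_supp.cthickening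
  obtain ⟨w, hw, hfin, hsum⟩ := exists_finsum_mul_apply_eq_mul_apply_indicator hM hT_prop hf
    hf_bdd hρ hψ_sum (finite_setOf_support_inter_nonempty hψ_sum hψ_fin hN)
    fun j => (hsL2 j).coeFn_toLp
  obtain ⟨w', hw', hfin', hsum'⟩ := exists_finsum_mul_apply_eq_mul_apply_indicator hM hT_prop hf
    hf_bdd hρ (φ := fun j x => ψ j (h⁻¹ • x)) (s := s) (fun x => hψ_sum (h⁻¹ • x))
    ((finite_setOf_support_inter_nonempty hψ_sum hψ_fin (hN.smul h⁻¹)).subset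
      fun _ ⟨y, hyψ, hyN⟩ => ⟨h⁻¹ • y, hyψ, smul_mem_smul_set hyN⟩)
    fun j => (coeFn_apply_toLp_ae_eq_comp_smul hU h (hsL2 j)).trans
      (Filter.Eventually.of_forall fun x => by simp only [hs_inv])
  have hcomm : ∀ u, U h (T u) = T (U h u) := fun u => congr($(hTU h) u)
  simp only [hcomm]
  exact ⟨hfin', hfin, by rw [hsum', hsum, Lp.ext (hw'.trans hw.symm)]⟩

/-- If `T` is a bounded operator on `L²(X,μ)` of finite propagation
commuting with all translation operators `U_g`, `{ψ_j}` is a partition of unity with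
uniformly locally finite supports, and `s` is a Borel `G`-invariant function with
`ψ_j·s ∈ L²`, then the averaged section `Σ_j T(ψ_j·s)` is `G`-invariant: localised by any
bounded Borel `f` with bounded nonempty support, `Σ_j f·U_h(T(ψ_j·s)) = Σ_j f·T(ψ_j·s)`,
both sums having only finitely many nonzero terms. -/
theorem averaged_operator_section_G_invariant
    {G X : Type*}
    [Group G] [TopologicalSpace G] [IsTopologicalGroup G] [LocallyCompactSpace G] [T2Space G]
    [MeasurableSpace G] [BorelSpace G]
    [MetricSpace X] [MeasurableSpace X] [BorelSpace X]
    [MulAction G X] [ContinuousSMul G X]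
    (hiso : ∀ (g : G) (x y : X), dist (g • x) (g • y) = dist x y)
    (μ : Measure X) [SMulInvariantMeasure G X μ]
    (r : ℝ) (hr : 0 < r)
    (T : Lp ℂ 2 μ →L[ℂ] Lp ℂ 2 μ)
    (M : (X → ℂ) → Lp ℂ 2 μ →L[ℂ] Lp ℂ 2 μ)
    (hM : ∀ f : X → ℂ, Measurable f → (∃ C, ∀ x, ‖f x‖ ≤ C) →
      ∀ u : Lp ℂ 2 μ, (M f u : X → ℂ) =ᵐ[μ] fun x => f x * (u : X → ℂ) x)
    (U : G → Lp ℂ 2 μ →L[ℂ] Lp ℂ 2 μ)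
    (hU : ∀ (g : G) (u : Lp ℂ 2 μ),
      (U g u : X → ℂ) =ᵐ[μ] fun x => (u : X → ℂ) (g⁻¹ • x))
    (hT_prop : ∀ f f' : X → ℂ, Measurable f → Measurable f' →
      (∃ C, ∀ x, ‖f x‖ ≤ C) → (∃ C, ∀ x, ‖f' x‖ ≤ C) →
      ENNReal.ofReal r < (⨅ x ∈ support f, ⨅ y ∈ support f', edist x y) →
      (M f).comp (T.comp (M f')) = 0)
    (hTU : ∀ g : G, (U g).comp T = T.comp (U g))
    (ψ : ℕ → X → ℝ)
    (hψ_cont : ∀ j, Continuous (ψ j))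
    (hψ_01 : ∀ j x, ψ j x ∈ Set.Icc (0 : ℝ) 1)
    (hψ_sum : ∀ x, HasSum (fun j => ψ j x) 1)
    (hψ_fin : ∀ (j : ℕ) (ρ : ℝ), 0 < ρ →
      {k : ℕ | (⨅ x ∈ support (ψ j), ⨅ y ∈ support (ψ k), edist x y) ≤
        ENNReal.ofReal ρ}.Finite)
    (s : X → ℂ) (hs_meas : Measurable s)
    (hs_inv : ∀ (g : G) (x : X), s (g • x) = s x)
    (hsL2 : ∀ j, MemLp (fun x => (ψ j x : ℂ) * s x) 2 μ) :
    ∀ (h : G) (f : X → ℂ), Measurable f → (∃ C, ∀ x, ‖f x‖ ≤ C) →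
      Bornology.IsBounded (support f) → (support f).Nonempty →
      {j : ℕ | M f (U h (T (MemLp.toLp (fun x => (ψ j x : ℂ) * s x) (hsL2 j)))) ≠ 0}.Finite ∧
      {j : ℕ | M f (T (MemLp.toLp (fun x => (ψ j x : ℂ) * s x) (hsL2 j))) ≠ 0}.Finite ∧
      ∑ᶠ j : ℕ, M f (U h (T (MemLp.toLp (fun x => (ψ j x : ℂ) * s x) (hsL2 j)))) =
        ∑ᶠ j : ℕ, M f (T (MemLp.toLp (fun x => (ψ j x : ℂ) * s x) (hsL2 j))) :=
  averaged_operator_section_G_invariant_general hiso μ r hr T M hM U hU hT_prop hTU ψ hψ_sum hψ_fin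
    s hs_inv hsL2
end
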